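/- Let X be a nonempty finite partially ordered set whose comparability graph G is connected and let R be a ring. Then the fractional automorphisms of I(X,R) form a subgroup of the group of ring automorphisms of I(X,R), and this subgroup is isomorphic as a group to the direct product of |X| − 1 copies of the group of invertible central elements of R (note that for a connected graph, the number of edges minus the cyclomatic number equals the number of vertices minus 1). -/

import Mathlib

/-- A ring automorphism of the incidence algebra is *multiplicative* if it fixes every
function supported on the diagonal and maps functions vanishing on the diagonal to
functions vanishing on the diagonal. -/
def IsMultAut {X R : Type*} [Preorder X] [LocallyFiniteOrder X] [DecidableEq X] [Ring R]
    (φ : RingAut (IncidenceAlgebra R X)) : Prop :=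
  (∀ f : IncidenceAlgebra R X, (∀ x y : X, x ≠ y → f x y = 0) → φ f = f) ∧
  (∀ f : IncidenceAlgebra R X, (∀ x : X, f x x = 0) → ∀ x : X, (φ f) x x = 0)

/-- An automorphism of the incidence algebra is a *fractional automorphism* if it is the
inner automorphism given by a diagonal unit whose diagonal entries are invertible central
elements of `R`. -/
def IsFracAut {X R : Type*} [Preorder X] [LocallyFiniteOrder X] [DecidableEq X] [Ring R]
    (φ : RingAut (IncidenceAlgebra R X)) : Prop :=
  ∃ (v : X → R) (d : (IncidenceAlgebra R X)ˣ),
    (∀ x : X, v x ∈ Set.center R ∧ IsUnit (v x)) ∧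
    (∀ x : X, (d : IncidenceAlgebra R X) x x = v x) ∧
    (∀ x y : X, x ≠ y → (d : IncidenceAlgebra R X) x y = 0) ∧
    (∀ f : IncidenceAlgebra R X, φ f = ↑d⁻¹ * f * ↑d)

/-- The comparability graph of a partially ordered set: `x` and `y` are adjacent iff
they are distinct and comparable. -/
def compGraph (X : Type*) [PartialOrder X] : SimpleGraph X where
  Adj x y := x < y ∨ y < x
  symm := ⟨fun _ _ (h : _ ∨ _) => h.symm⟩
  loopless := ⟨fun x (h : _ ∨ _) => h.elim (lt_irrefl x) (lt_irrefl x)⟩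

/-
Conjugation by the diagonal unit with entries `v x ∈ Z(R)ˣ` acts by
`f x y ↦ v x * f x y * (v y)⁻¹`, so the fractional automorphisms are the image of a group
homomorphism `(X → Z(R)ˣ) →* Aut(I(X, R))`. Testing an automorphism in its kernel on the zeta
function shows that `v x = v y` whenever `x ≤ y`; along paths of the comparability graph this
makes `v` constant, and conversely constant `v` act trivially. Normalising `v` to be `1` at a
base point `x₀` therefore identifies the image with the functions `X \ {x₀} → Z(R)ˣ`.
-/
def Units.conjRingAut {A : Type*} [Semiring A] : Aˣ →* RingAut A :=
  (MulSemiringAction.toRingAut (ConjAct Aˣ) A).comp ConjAct.toConjAct.toMonoidHom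

theorem Units.conjRingAut_apply {A : Type*} [Semiring A] (u : Aˣ) (a : A) :
    Units.conjRingAut u a = u * a * ↑u⁻¹ :=
  rfl

theorem SimpleGraph.Reachable.apply_eq_of_adj {V A : Type*} {G : SimpleGraph V} {f : V → A}
    (hf : ∀ x y, G.Adj x y → f x = f y) {x y : V} (h : G.Reachable x y) : f x = f y := by
  obtain ⟨p⟩ := h
  induction p with
  | nil => rfl
  | cons hadj _ ih => exact (hf _ _ hadj).trans ih

theorem Subring.exists_units_center_coe_eq {R : Type*} [Ring R] {r : R}
    (hc : r ∈ Set.center R) (hu : IsUnit r) :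
    ∃ u : (Subring.center R)ˣ, ((u : Subring.center R) : R) = r := by
  obtain ⟨w, rfl⟩ := hu
  exact ⟨⟨⟨w, hc⟩, ⟨↑w⁻¹, Set.units_inv_mem_center hc⟩, Subtype.ext w.mul_inv,
    Subtype.ext w.inv_mul⟩, rfl⟩

def Pi.extendByOne {X G : Type*} [DecidableEq X] [Monoid G] (x₀ : X) :
    ({x // x ≠ x₀} → G) →* (X → G) where
  toFun w x := if h : x = x₀ then 1 else w ⟨x, h⟩
  map_one' := funext fun x => by by_cases h : x = x₀ <;> simp [h]
  map_mul' a b := funext fun x => by by_cases h : x = x₀ <;> simp [h]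

@[simp]
theorem Pi.extendByOne_apply_self {X G : Type*} [DecidableEq X] [Monoid G] (x₀ : X)
    (w : {x // x ≠ x₀} → G) : Pi.extendByOne x₀ w x₀ = 1 :=
  dif_pos rfl

@[simp]
theorem Pi.extendByOne_apply_of_ne {X G : Type*} [DecidableEq X] [Monoid G] {x₀ x : X}
    (w : {x // x ≠ x₀} → G) (h : x ≠ x₀) : Pi.extendByOne x₀ w x = w ⟨x, h⟩ :=
  dif_neg h

theorem apply_eq_of_compGraph_connected {X A : Type*} [PartialOrder X]
    (hG : (compGraph X).Connected) {f : X → A} (hf : ∀ x y, x ≤ y → f x = f y) (x y : X) :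
    f x = f y :=
  (hG.preconnected x y).apply_eq_of_adj fun a b hab =>
    (hab : a < b ∨ b < a).elim (fun h => hf a b h.le) (fun h => (hf b a h.le).symm)

namespace IncidenceAlgebra

section Semiring

variable {X R : Type*} [Preorder X] [LocallyFiniteOrder X] [DecidableEq X] [Semiring R]

def diag : (X → R) →* IncidenceAlgebra R X where
  toFun u := ⟨fun x y => if x = y then u x else 0, fun x y hxy => by
    rw [if_neg]; rintro rfl; exact hxy le_rfl⟩
  map_one' := by ext x y; simp [one_apply]
  map_mul' u v := by
    ext x y hxy
    by_cases h : x = y <;> simp [h]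

@[simp]
theorem diag_apply (u : X → R) (x y : X) : diag u x y = if x = y then u x else 0 :=
  rfl

theorem diag_mul_apply (u : X → R) (f : IncidenceAlgebra R X) (x y : X) :
    (diag u * f) x y = u x * f x y := by
  by_cases hxy : x ≤ y
  · simp [ite_mul, hxy]
  · simp [apply_eq_zero_of_not_le hxy]

theorem mul_diag_apply (u : X → R) (f : IncidenceAlgebra R X) (x y : X) :
    (f * diag u) x y = f x y * u y := by
  by_cases hxy : x ≤ y
  · simp [mul_ite, hxy]
  · simp [apply_eq_zero_of_not_le hxy]

end Semiring

section Ring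

variable {X R : Type*} [Preorder X] [LocallyFiniteOrder X] [DecidableEq X] [Ring R]

def diagUnits : (X → (Subring.center R)ˣ) →* (IncidenceAlgebra R X)ˣ :=
  (Units.map (diag.comp ((Subring.center R).subtype.toMonoidHom.compLeft X))).comp
    MulEquiv.piUnits.symm.toMonoidHom

theorem coe_diagUnits (v : X → (Subring.center R)ˣ) :
    (diagUnits v : IncidenceAlgebra R X) = diag fun x => (v x : R) :=
  rfl

def fracAutHom : (X → (Subring.center R)ˣ) →* RingAut (IncidenceAlgebra R X) :=
  Units.conjRingAut.comp diagUnits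

theorem fracAutHom_apply (v : X → (Subring.center R)ˣ) (f : IncidenceAlgebra R X) (x y : X) :
    fracAutHom v f x y = v x * f x y * ↑(v y)⁻¹ := by
  rw [fracAutHom, MonoidHom.comp_apply, Units.conjRingAut_apply, ← map_inv, coe_diagUnits,
    coe_diagUnits, mul_diag_apply, diag_mul_apply]
  rfl

theorem fracAutHom_eq_one_iff {v : X → (Subring.center R)ˣ} :
    fracAutHom v = 1 ↔ ∀ x y, x ≤ y → v x = v y := by
  constructor
  · classical
    intro h x y hxy
    have hzeta := congr_arg (fun φ : RingAut (IncidenceAlgebra R X) => φ (zeta R) x y) h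
    simp only [fracAutHom_apply, zeta_of_le hxy, mul_one, RingAut.one_apply] at hzeta
    exact mul_inv_eq_one.1 (Units.ext (Subtype.ext hzeta))
  · intro h
    ext f x y hxy
    rw [fracAutHom_apply, h x y hxy, ← Subring.mem_center_iff.1 (v y).val.2, mul_assoc,
      ← MulMemClass.coe_mul, Units.mul_inv, OneMemClass.coe_one, mul_one]
    rfl

theorem fracAutHom_const (c : (Subring.center R)ˣ) :
    fracAutHom (fun _ : X => c) = 1 :=
  fracAutHom_eq_one_iff.2 fun _ _ _ => rfl

theorem isFracAut_iff_mem_range (φ : RingAut (IncidenceAlgebra R X)) :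
    IsFracAut φ ↔ φ ∈ (fracAutHom : _ →* RingAut (IncidenceAlgebra R X)).range := by
  constructor
  · rintro ⟨v, d, hv, hdiag, hoff, hφ⟩
    choose u hu using fun x => Subring.exists_units_center_coe_eq (hv x).1 (hv x).2
    have hd : d = diagUnits u := by
      ext x y -
      by_cases h : x = y
      · subst h; simp [coe_diagUnits, hdiag, hu]
      · simp [coe_diagUnits, hoff x y h, h]
    refine ⟨u⁻¹, RingEquiv.ext fun f => ?_⟩
    rw [hφ, hd, fracAutHom, MonoidHom.comp_apply, Units.conjRingAut_apply, map_inv, inv_inv]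
  · rintro ⟨v, rfl⟩
    refine ⟨fun x => ↑(v x)⁻¹, diagUnits v⁻¹, fun x => ⟨(v x)⁻¹.val.2, ?_⟩, fun x => ?_,
      fun x y h => ?_, fun f => ?_⟩
    · exact (v x)⁻¹.isUnit.map (Subring.center R).subtype
    · rw [coe_diagUnits]; simp
    · rw [coe_diagUnits]; simp [h]
    · rw [map_inv, inv_inv]
      rfl

end Ring

section PartialOrder

variable {X R : Type*} [PartialOrder X] [LocallyFiniteOrder X] [DecidableEq X] [Ring R]

theorem range_fracAutHom_comp_extendByOne (x₀ : X) :
    (fracAutHom.comp (Pi.extendByOne x₀)).range =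
      (fracAutHom : _ →* RingAut (IncidenceAlgebra R X)).range := by
  refine le_antisymm (by rintro _ ⟨w, rfl⟩; exact ⟨_, rfl⟩) ?_
  rintro _ ⟨v, rfl⟩
  refine ⟨fun x => v x * (v x₀)⁻¹, ?_⟩
  have hv : Pi.extendByOne x₀ (fun x => v x * (v x₀)⁻¹) = v * fun _ => (v x₀)⁻¹ := by
    funext x
    by_cases h : x = x₀
    · subst h; simp
    · simp [h]
  rw [MonoidHom.comp_apply, hv, map_mul, fracAutHom_const, mul_one]

theorem fracAutHom_comp_extendByOne_injective (hG : (compGraph X).Connected) (x₀ : X) :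
    Function.Injective
      ((fracAutHom : _ →* RingAut (IncidenceAlgebra R X)).comp (Pi.extendByOne x₀)) := by
  refine (injective_iff_map_eq_one _).2 fun w hw => funext fun x => ?_
  have := apply_eq_of_compGraph_connected hG (fracAutHom_eq_one_iff.1 hw) x x₀
  simpa [x.2] using this

end PartialOrder

end IncidenceAlgebra

/-- For a nonempty finite poset with connected comparability graph, the
fractional automorphisms form a subgroup of the automorphism group of the incidence
algebra, isomorphic to the direct product of `|X| - 1` copies of the group of invertible
central elements of `R` (Corollary 3.7). -/
theorem frac_aut_subgroup_iso {X R : Type*} [PartialOrder X] [Fintype X] [Nonempty X]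
    [LocallyFiniteOrder X] [DecidableEq X] [Ring R]
    (hG : (compGraph X).Connected) :
    ∃ H : Subgroup (RingAut (IncidenceAlgebra R X)),
      (∀ φ : RingAut (IncidenceAlgebra R X), φ ∈ H ↔ IsFracAut φ) ∧
      Nonempty (H ≃* (Fin (Fintype.card X - 1) → (Subring.center R)ˣ)) := by
  obtain ⟨x₀⟩ := ‹Nonempty X›
  refine ⟨IncidenceAlgebra.fracAutHom.range,
    fun φ => (IncidenceAlgebra.isFracAut_iff_mem_range φ).symm, ?_⟩
  have hcard : Fintype.card {x // x ≠ x₀} = Fintype.card X - 1 := by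
    simp [Fintype.card_subtype_compl]
  exact ⟨(MulEquiv.subgroupCongr (IncidenceAlgebra.range_fracAutHom_comp_extendByOne x₀)).symm
    |>.trans (MonoidHom.ofInjective
      (IncidenceAlgebra.fracAutHom_comp_extendByOne_injective hG x₀)).symm
    |>.trans (MulEquiv.arrowCongr (Fintype.equivFinOfCardEq hcard) (MulEquiv.refl _))⟩
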